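/- arXiv:2512.16359 — 2 statements merged into one kernel-verified Lean document; each statement's English description precedes it below -/
import Mathlib

section
/- Let f be four times continuously differentiable on an open set Ω ⊆ ℝ² containing the closed disk of radius R centered at (x₀, y₀). Then the error in the two-circle point value formula improves to fourth order: f(x₀, y₀) = (1/3)·[ (4/(2π))·∫₀^{2π} f(x₀ + (R/2)cos θ, y₀ + (R/2)sin θ) dθ − (1/(2π))·∫₀^{2π} f(x₀ + R cos θ, y₀ + R sin θ) dθ ] + O(R⁴) as R → 0⁺. -/
/-!
Along each ray from `p`, Taylor's theorem with the Lagrange bound expands `f (p + r • v)` to third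
order with an `O(r⁴)` remainder. Averaging over the unit circle kills the first- and third-order
terms: `θ ↦ (cos θ, sin θ)` is `π`-antiperiodic and an odd-degree form changes sign with its
argument. Hence the circle mean is `f p + c r² + O(r⁴)`, and the Richardson combination
`(4 · mean (R/2) - mean R) / 3` eliminates the `r²` term.
-/

open Real Set Pointwise Nat

section

variable {E F : Type*} [NormedAddCommGroup E] [NormedSpace ℝ E]
  [NormedAddCommGroup F] [NormedSpace ℝ F]

theorem iteratedDeriv_comp_add_smul {f : E → F} {Ω : Set E} (hΩ : IsOpen Ω)
    {n : WithTop ℕ∞} (hf : ContDiffOn ℝ n f Ω) {k : ℕ} (hk : k ≤ n) {p w : E} {τ : ℝ}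
    (hτ : p + τ • w ∈ Ω) :
    iteratedDeriv k (fun t : ℝ => f (p + t • w)) τ
      = iteratedFDeriv ℝ k f (p + τ • w) (fun _ => w) := by
  set L : ℝ →L[ℝ] E := ContinuousLinearMap.toSpanSingleton ℝ w
  have hs : IsOpen (-p +ᵥ Ω) := hΩ.vadd (-p)
  have hLs : IsOpen (L ⁻¹' (-p +ᵥ Ω)) := hs.preimage L.continuous
  have hτs : L τ ∈ -p +ᵥ Ω := by simpa [L, Set.mem_vadd_set_iff_neg_vadd_mem] using hτ
  have hg : ContDiffOn ℝ n (fun y => f (p + y)) (-p +ᵥ Ω) :=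
    hf.comp (contDiff_const.add contDiff_id).contDiffOn fun y hy => by
      simpa [Set.mem_vadd_set_iff_neg_vadd_mem] using hy
  rw [iteratedDeriv_eq_iteratedFDeriv, ← iteratedFDerivWithin_of_isOpen k hLs hτs,
    show (fun t : ℝ => f (p + t • w)) = (fun y => f (p + y)) ∘ L from rfl,
    L.iteratedFDerivWithin_comp_right hg hs.uniqueDiffOn hLs.uniqueDiffOn hτs hk,
    ContinuousMultilinearMap.compContinuousLinearMap_apply,
    iteratedFDerivWithin_comp_add_left, vadd_neg_vadd]
  simp [L, iteratedFDerivWithin_of_isOpen k hΩ hτ]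

theorem norm_sub_taylor_le {f : E → F} {Ω : Set E} (hΩ : IsOpen Ω) {n : ℕ}
    (hf : ContDiffOn ℝ (n + 1) f Ω) {p w : E} {r M : ℝ} (hr : 0 < r)
    (hball : Metric.closedBall p r ⊆ Ω)
    (hM : ∀ y ∈ Metric.closedBall p r, ‖iteratedFDeriv ℝ (n + 1) f y‖ ≤ M) (hw : ‖w‖ ≤ 1) :
    ‖f (p + r • w) - ∑ k ∈ Finset.range (n + 1),
        (r ^ k / k !) • iteratedFDeriv ℝ k f p (fun _ => w)‖ ≤ M * r ^ (n + 1) / n ! := by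
  have hseg : ∀ t ∈ Icc 0 r, p + t • w ∈ Metric.closedBall p r := fun t ht => by
    rw [mem_closedBall_iff_norm, add_sub_cancel_left, norm_smul, Real.norm_of_nonneg ht.1]
    nlinarith [ht.2, norm_nonneg w]
  have hline {m : WithTop ℕ∞} : ContDiff ℝ m fun t : ℝ => p + t • w :=
    contDiff_const.add (contDiff_id.smul contDiff_const)
  have hderiv : ∀ k ≤ n + 1, ∀ t ∈ Icc 0 r, iteratedDerivWithin k (fun t => f (p + t • w))
      (Icc 0 r) t = iteratedFDeriv ℝ k f (p + t • w) (fun _ => w) := by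
    intro k hk t ht
    have hk' : (k : WithTop ℕ∞) ≤ n + 1 := by exact_mod_cast hk
    have hft : ContDiffAt ℝ k (fun t => f (p + t • w)) t :=
      ((hf.contDiffAt (hΩ.mem_nhds (hball (hseg t ht)))).of_le hk').comp t hline.contDiffAt
    rw [iteratedDerivWithin_eq_iteratedDeriv (uniqueDiffOn_Icc hr) hft ht,
      iteratedDeriv_comp_add_smul hΩ hf hk' (hball (hseg t ht))]
  have hremainder := taylor_mean_remainder_bound hr.le
    (f := fun t => f (p + t • w)) (hf.comp hline.contDiffOn fun t ht => hball (hseg t ht))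
    (right_mem_Icc.2 hr.le)
    fun t ht => by
      rw [hderiv _ le_rfl t ht]
      calc ‖iteratedFDeriv ℝ (n + 1) f (p + t • w) (fun _ => w)‖
          ≤ ‖iteratedFDeriv ℝ (n + 1) f (p + t • w)‖ * ∏ _i : Fin (n + 1), ‖w‖ :=
            ContinuousMultilinearMap.le_opNorm _ _
        _ ≤ M * 1 := by
            gcongr
            · exact (norm_nonneg _).trans (hM _ (hseg t ht))
            · exact hM _ (hseg t ht)
            · exact Finset.prod_le_one (fun _ _ => norm_nonneg w) fun _ _ => hw
        _ = M := mul_one M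
  rw [taylor_within_apply, sub_zero] at hremainder
  convert hremainder using 3
  refine Finset.sum_congr rfl fun k hk => ?_
  rw [hderiv k (Finset.mem_range_succ_iff.1 hk |>.trans n.le_succ) 0 (left_mem_Icc.2 hr.le),
    zero_smul, add_zero, div_eq_inv_mul]

theorem ContDiffOn.exists_closedBall_norm_iteratedFDeriv_le {f : E → F} {Ω : Set E}
    (hΩ : IsOpen Ω) {n : WithTop ℕ∞} (hf : ContDiffOn ℝ n f Ω) {k : ℕ} (hk : k ≤ n) {p : E}
    (hp : p ∈ Ω) : ∃ ρ > 0, ∃ M, Metric.closedBall p ρ ⊆ Ω ∧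
      ∀ y ∈ Metric.closedBall p ρ, ‖iteratedFDeriv ℝ k f y‖ ≤ M := by
  have hcont : ContinuousAt (fun y => ‖iteratedFDeriv ℝ k f y‖) p :=
    ((hf.contDiffAt (hΩ.mem_nhds hp)).continuousAt_iteratedFDeriv hk).norm
  have hnear : ∀ᶠ y in nhds p, y ∈ Ω ∧ ‖iteratedFDeriv ℝ k f y‖ < ‖iteratedFDeriv ℝ k f p‖ + 1 :=
    Filter.Eventually.and (hΩ.mem_nhds hp) (hcont.eventually (gt_mem_nhds (lt_add_one _)))
  obtain ⟨ρ, hρ, hsub⟩ := Metric.nhds_basis_closedBall.mem_iff.1 hnear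
  exact ⟨ρ, hρ, _, fun y hy => (hsub hy).1, fun y hy => (hsub hy).2.le⟩

theorem Function.Antiperiodic.intervalIntegral_eq_zero {g : ℝ → F} {c : ℝ}
    (hg : Function.Antiperiodic g c) (hcont : Continuous g) (a : ℝ) :
    ∫ x in a..a + 2 * c, g x = 0 := by
  have hshift : ∫ x in a + c..a + 2 * c, g x = -∫ x in a..a + c, g x := by
    rw [← intervalIntegral.integral_neg, show a + 2 * c = a + c + c by ring,
      ← intervalIntegral.integral_comp_add_right]
    simp only [hg _]
  rw [← intervalIntegral.integral_add_adjacent_intervals (hcont.intervalIntegrable _ _)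
    (hcont.intervalIntegrable _ (a + 2 * c)), hshift, add_neg_cancel]

theorem Function.Antiperiodic.continuousMultilinearMap_apply {k : ℕ} (hk : Odd k)
    (A : ContinuousMultilinearMap ℝ (fun _ : Fin k => E) F) {v : ℝ → E} {c : ℝ}
    (hv : Function.Antiperiodic v c) : Function.Antiperiodic (fun x => A fun _ => v x) c := by
  intro x
  have := A.map_smul_univ (fun _ => (-1 : ℝ)) (fun _ => v x)
  simp only [Finset.prod_const, Finset.card_univ, Fintype.card_fin, hk.neg_one_pow, neg_smul,
    one_smul] at this
  simpa [hv x] using this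

theorem intervalIntegral_continuousMultilinearMap_cos_sin_eq_zero {k : ℕ} (hk : Odd k)
    (A : ContinuousMultilinearMap ℝ (fun _ : Fin k => ℝ × ℝ) F) :
    ∫ θ in (0 : ℝ)..2 * π, A (fun _ => (cos θ, sin θ)) = 0 := by
  have hv : Function.Antiperiodic (fun θ => (cos θ, sin θ)) π := fun θ => by
    simp [cos_antiperiodic θ, sin_antiperiodic θ]
  simpa using (hv.continuousMultilinearMap_apply hk A).intervalIntegral_eq_zero (by fun_prop) 0

theorem intervalIntegral_sum_iteratedFDeriv_cos_sin [CompleteSpace F] (f : ℝ × ℝ → F)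
    (p : ℝ × ℝ) (r : ℝ) :
    ∫ θ in (0 : ℝ)..2 * π, ∑ k ∈ Finset.range 4,
        (r ^ k / k !) • iteratedFDeriv ℝ k f p (fun _ => (cos θ, sin θ))
      = (2 * π) • f p + (r ^ 2 / 2) •
        ∫ θ in (0 : ℝ)..2 * π, iteratedFDeriv ℝ 2 f p (fun _ => (cos θ, sin θ)) := by
  rw [intervalIntegral.integral_finsetSum fun k _ =>
    Continuous.intervalIntegrable (by fun_prop) _ _]
  simp only [Finset.sum_range_succ, Finset.sum_range_zero, intervalIntegral.integral_smul,
    intervalIntegral_continuousMultilinearMap_cos_sin_eq_zero odd_one,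
    intervalIntegral_continuousMultilinearMap_cos_sin_eq_zero (⟨1, rfl⟩ : Odd 3), smul_zero,
    add_zero]
  simp

noncomputable def circleMean (f : ℝ × ℝ → F) (p : ℝ × ℝ) (r : ℝ) : F :=
  (2 * π)⁻¹ • ∫ θ in (0 : ℝ)..2 * π, f (p + r • (cos θ, sin θ))

theorem norm_circleMean_sub_le [CompleteSpace F] {f : ℝ × ℝ → F} {Ω : Set (ℝ × ℝ)}
    (hΩ : IsOpen Ω) (hf : ContDiffOn ℝ 4 f Ω) {p : ℝ × ℝ} {r M : ℝ} (hr : 0 < r)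
    (hball : Metric.closedBall p r ⊆ Ω)
    (hM : ∀ y ∈ Metric.closedBall p r, ‖iteratedFDeriv ℝ 4 f y‖ ≤ M) :
    ‖circleMean f p r - (f p + (r ^ 2 / 2) •
      circleMean (fun w => iteratedFDeriv ℝ 2 f p fun _ => w) 0 1)‖ ≤ M * r ^ 4 / 6 := by
  set v : ℝ → ℝ × ℝ := fun θ => (cos θ, sin θ)
  have hv (θ : ℝ) : ‖v θ‖ ≤ 1 :=
    max_le (by simpa using abs_cos_le_one θ) (by simpa using abs_sin_le_one θ)
  set P : ℝ → F := fun θ =>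
    ∑ k ∈ Finset.range 4, (r ^ k / k !) • iteratedFDeriv ℝ k f p fun _ => v θ
  have hP : Continuous P := by fun_prop
  have hcircle : Continuous fun θ => f (p + r • v θ) :=
    hf.continuousOn.comp_continuous (by fun_prop) fun θ => hball <| by
      rw [mem_closedBall_iff_norm, add_sub_cancel_left, norm_smul, Real.norm_of_nonneg hr.le]
      exact mul_le_of_le_one_right hr.le (hv θ)
  have herr : ‖∫ θ in (0 : ℝ)..2 * π, (f (p + r • v θ) - P θ)‖ ≤ M * r ^ 4 / 6 * (2 * π) := by
    have := intervalIntegral.norm_integral_le_of_norm_le_const (a := 0) (b := 2 * π)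
      fun θ _ => norm_sub_taylor_le (n := 3) hΩ hf hr hball hM (hv θ)
    simpa [abs_of_pos two_pi_pos, Nat.factorial] using this
  calc _ = ‖(2 * π)⁻¹ • ∫ θ in (0 : ℝ)..2 * π, (f (p + r • v θ) - P θ)‖ := by
        rw [intervalIntegral.integral_sub (hcircle.intervalIntegrable _ _)
            (hP.intervalIntegrable _ _), intervalIntegral_sum_iteratedFDeriv_cos_sin, smul_sub,
          smul_add, smul_smul, inv_mul_cancel₀ two_pi_pos.ne', one_smul, smul_comm _ (r ^ 2 / 2)]
        simp [circleMean, v]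
    _ ≤ (2 * π)⁻¹ * (M * r ^ 4 / 6 * (2 * π)) := by
        rw [norm_smul, norm_inv, Real.norm_of_nonneg two_pi_pos.le]
        gcongr
    _ = M * r ^ 4 / 6 := by field_simp

end

theorem abs_sub_richardson_le {m : ℝ → ℝ} {a c K R : ℝ}
    (h₁ : |m (R / 2) - (a + c * (R / 2) ^ 2)| ≤ K * (R / 2) ^ 4)
    (h₂ : |m R - (a + c * R ^ 2)| ≤ K * R ^ 4) :
    |a - (4 * m (R / 2) - m R) / 3| ≤ 5 / 12 * K * R ^ 4 := by
  rw [div_pow, div_pow] at h₁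
  obtain ⟨h₁l, h₁u⟩ := abs_le.1 h₁
  obtain ⟨h₂l, h₂u⟩ := abs_le.1 h₂
  rw [abs_le]
  constructor <;> linarith

/-- Two-circle point-value formula with fourth-order error for `C⁴` functions. -/
theorem stmt_1 (f : ℝ × ℝ → ℝ) (Ω : Set (ℝ × ℝ)) (hΩ : IsOpen Ω)
    (x₀ y₀ : ℝ) (hmem : (x₀, y₀) ∈ Ω) (hf : ContDiffOn ℝ 4 f Ω) :
    ∃ C > (0:ℝ), ∃ R₀ > (0:ℝ), ∀ R : ℝ, 0 < R → R ≤ R₀ →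
      Metric.closedBall (x₀, y₀) R ⊆ Ω →
      |f (x₀, y₀) -
        (1/3) * ((4/(2*π)) *
            (∫ θ in (0:ℝ)..(2*π), f (x₀ + (R/2) * Real.cos θ, y₀ + (R/2) * Real.sin θ))
          - (1/(2*π)) *
            (∫ θ in (0:ℝ)..(2*π), f (x₀ + R * Real.cos θ, y₀ + R * Real.sin θ)))|
        ≤ C * R^4 := by
  obtain ⟨ρ, hρ, M, hball, hM⟩ := hf.exists_closedBall_norm_iteratedFDeriv_le hΩ le_rfl hmem
  have hM₀ : 0 ≤ M := (norm_nonneg _).trans (hM _ (Metric.mem_closedBall_self hρ.le))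
  set J := circleMean (fun w => iteratedFDeriv ℝ 2 f (x₀, y₀) fun _ => w) 0 1
  have hmean (r : ℝ) (hr : 0 < r) (hrρ : r ≤ ρ) :
      |circleMean f (x₀, y₀) r - (f (x₀, y₀) + J / 2 * r ^ 2)| ≤ M / 6 * r ^ 4 := by
    have hsub := Metric.closedBall_subset_closedBall (x := (x₀, y₀)) hrρ
    have := norm_circleMean_sub_le hΩ hf hr (hsub.trans hball) fun y hy => hM y (hsub hy)
    rw [Real.norm_eq_abs, smul_eq_mul] at this
    convert this using 3 <;> ring
  refine ⟨5 / 12 * (M / 6) + 1, by positivity, ρ, hρ, fun R hR hRρ _ => ?_⟩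
  have h := abs_sub_richardson_le (hmean (R / 2) (by positivity) (by linarith)) (hmean R hR hRρ)
  have hI (r : ℝ) : circleMean f (x₀, y₀) r
      = (2 * π)⁻¹ * ∫ θ in (0 : ℝ)..2 * π, f (x₀ + r * cos θ, y₀ + r * sin θ) := rfl
  rw [hI, hI] at h
  refine (le_of_eq ?_).trans (h.trans ?_)
  · congr 2
    ring
  · nlinarith [pow_pos hR 4]
end

section
/- Let f ∈ C³(Ω) on an open set Ω ⊆ ℝ² containing the closed disk of radius r > 0 centered at the origin, and define g(θ) = f(r cos θ, r sin θ). Then for n = 4: ∫₀^{2π} g(θ) dθ = (2π/4)·∑_{k=0}^{3} g(2πk/4) + O(r³) as r → 0⁺. -/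
/-!
The four-point rule integrates every polynomial of degree at most two in `(cos θ, sin θ)`
exactly, in particular the second-order Taylor polynomial of `f` at the origin restricted to the
circle of radius `r`. Its error on `g` is therefore its error on the Taylor remainder, which is
`O(r³)` uniformly in `θ` by Taylor's theorem along the rays `t ↦ t • v`; and the error of the rule
on any function is at most `4π` times its sup norm.
-/

open Real MeasureTheory Set
open scoped Nat

section Taylor

variable {E F : Type*} [NormedAddCommGroup E] [NormedSpace ℝ E]
    [NormedAddCommGroup F] [NormedSpace ℝ F]

noncomputable def taylorSeriesWithin (f : E → F) (s : Set E) (x : E) :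
    FormalMultilinearSeries ℝ E F :=
  fun k => (k ! : ℝ)⁻¹ • iteratedFDerivWithin ℝ k f s x

variable {f : E → F} {s : Set E}

theorem iteratedDerivWithin_comp_smul_right {n : WithTop ℕ∞} (hs : UniqueDiffOn ℝ s)
    (hf : ContDiffOn ℝ n f s) (v : E) {I : Set ℝ} (hI : UniqueDiffOn ℝ I)
    (hIs : ∀ t ∈ I, t • v ∈ s) {k : ℕ} (hk : k ≤ n) {t : ℝ} (ht : t ∈ I) :
    iteratedDerivWithin k (fun t => f (t • v)) I t =
      iteratedFDerivWithin ℝ k f s (t • v) (fun _ => v) := by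
  have hseries : HasFTaylorSeriesUpToOn n (fun t : ℝ => f (t • v)) _ I :=
    ((hf.ftaylorSeriesWithin hs).compContinuousLinearMap
      (ContinuousLinearMap.toSpanSingleton ℝ v)).mono hIs
  rw [iteratedDerivWithin_eq_iteratedFDerivWithin,
    ← hseries.eq_iteratedFDerivWithin_of_uniqueDiffOn hk hI ht]
  simp [ftaylorSeriesWithin]

theorem norm_sub_partialSum_taylorSeriesWithin_le {n : ℕ} (hs : UniqueDiffOn ℝ s)
    (hf : ContDiffOn ℝ (n + 1) f s) {v : E} (hv : ∀ t ∈ Icc (0:ℝ) 1, t • v ∈ s) {M : ℝ}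
    (hM : ∀ t ∈ Icc (0:ℝ) 1, ‖iteratedFDerivWithin ℝ (n + 1) f s (t • v) (fun _ => v)‖ ≤ M) :
    ‖f v - (taylorSeriesWithin f s 0).partialSum (n + 1) v‖ ≤ M / n ! := by
  have hg : ContDiffOn ℝ (n + 1) (fun t : ℝ => f (t • v)) (Icc 0 1) :=
    hf.comp (contDiff_id.smul contDiff_const).contDiffOn hv
  have hI := uniqueDiffOn_Icc (zero_lt_one' ℝ)
  have hbound := taylor_mean_remainder_bound zero_le_one hg (right_mem_Icc.2 zero_le_one) fun t ht =>
    (iteratedDerivWithin_comp_smul_right hs hf v hI hv (by exact_mod_cast le_rfl) ht).symm ▸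
      hM t ht
  have htaylor : taylorWithinEval (fun t => f (t • v)) n (Icc 0 1) 0 1 =
      (taylorSeriesWithin f s 0).partialSum (n + 1) v := by
    rw [taylor_within_apply, FormalMultilinearSeries.partialSum]
    refine Finset.sum_congr rfl fun k hk => ?_
    rw [iteratedDerivWithin_comp_smul_right hs hf v hI hv _ (left_mem_Icc.2 zero_le_one)]
    · simp [taylorSeriesWithin]
    · exact_mod_cast (Finset.mem_range_succ_iff.1 hk).trans n.le_succ
  simpa [htaylor] using hbound

theorem norm_sub_partialSum_taylorSeriesWithin_le_of_closedBall {n : ℕ} (hs : UniqueDiffOn ℝ s)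
    (hf : ContDiffOn ℝ (n + 1) f s) {ε M : ℝ} (hball : Metric.closedBall 0 ε ⊆ s)
    (hM : ∀ x ∈ Metric.closedBall 0 ε, ‖iteratedFDerivWithin ℝ (n + 1) f s x‖ ≤ M)
    {v : E} (hv : ‖v‖ ≤ ε) :
    ‖f v - (taylorSeriesWithin f s 0).partialSum (n + 1) v‖ ≤ M * ‖v‖ ^ (n + 1) / n ! := by
  have hseg : ∀ t ∈ Icc (0:ℝ) 1, t • v ∈ Metric.closedBall 0 ε := fun t ht => by
    rw [mem_closedBall_zero_iff, norm_smul, Real.norm_of_nonneg ht.1]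
    nlinarith [norm_nonneg v, ht.2]
  refine norm_sub_partialSum_taylorSeriesWithin_le hs hf (fun t ht => hball (hseg t ht))
    fun t ht => ?_
  calc ‖iteratedFDerivWithin ℝ (n + 1) f s (t • v) (fun _ => v)‖
      ≤ ‖iteratedFDerivWithin ℝ (n + 1) f s (t • v)‖ * ∏ _ : Fin (n + 1), ‖v‖ :=
        ContinuousMultilinearMap.le_opNorm _ _
    _ ≤ M * ‖v‖ ^ (n + 1) := by
        rw [Finset.prod_const, Finset.card_fin]
        gcongr
        exact hM _ (hseg t ht)

end Taylor

noncomputable def fourPointRuleError (g : ℝ → ℝ) : ℝ :=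
  (∫ θ in (0:ℝ)..(2*π), g θ) - (2*π/4) * ∑ k ∈ Finset.range 4, g (2*π*k/4)

theorem fourPointRuleError_sub {g h : ℝ → ℝ} (hg : IntervalIntegrable g volume 0 (2*π))
    (hh : IntervalIntegrable h volume 0 (2*π)) :
    fourPointRuleError (fun θ => g θ - h θ) = fourPointRuleError g - fourPointRuleError h := by
  simp only [fourPointRuleError, intervalIntegral.integral_sub hg hh, Finset.sum_sub_distrib]
  ring

theorem abs_fourPointRuleError_le {g : ℝ → ℝ} {B : ℝ} (hB : ∀ θ, |g θ| ≤ B) :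
    |fourPointRuleError g| ≤ 4 * π * B := by
  have hint : ‖∫ θ in (0:ℝ)..(2*π), g θ‖ ≤ B * |2*π - 0| :=
    intervalIntegral.norm_integral_le_of_norm_le_const fun θ _ => hB θ
  have hsum : |∑ k ∈ Finset.range 4, g (2*π*k/4)| ≤ 4 * B := by
    calc _ ≤ ∑ k ∈ Finset.range 4, |g (2*π*k/4)| := Finset.abs_sum_le_sum_abs _ _
      _ ≤ ∑ _k ∈ Finset.range 4, B := Finset.sum_le_sum fun k _ => hB _
      _ = 4 * B := by simp
  rw [Real.norm_eq_abs, sub_zero, abs_of_pos two_pi_pos] at hint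
  calc |fourPointRuleError g|
      ≤ |∫ θ in (0:ℝ)..(2*π), g θ| + (2*π/4) * |∑ k ∈ Finset.range 4, g (2*π*k/4)| := by
        rw [← abs_of_pos (by positivity : (0:ℝ) < 2*π/4), ← abs_mul]
        exact abs_sub _ _
    _ ≤ B * (2*π) + (2*π/4) * (4 * B) := by gcongr
    _ = 4 * π * B := by ring

theorem fourPointRuleError_trig (a b c d e f : ℝ) :
    fourPointRuleError (fun θ => a + b * cos θ + c * sin θ + d * cos θ ^ 2
      + e * (sin θ * cos θ) + f * sin θ ^ 2) = 0 := by
  have hint : (∫ θ in (0:ℝ)..(2*π), (a + b * cos θ + c * sin θ + d * cos θ ^ 2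
      + e * (sin θ * cos θ) + f * sin θ ^ 2)) = 2*π*a + π*d + π*f := by
    simp (disch := exact Continuous.intervalIntegrable (by fun_prop) _ _) only
      [intervalIntegral.integral_add, intervalIntegral.integral_const_mul,
        intervalIntegral.integral_const, integral_cos, integral_sin, integral_cos_sq,
        integral_sin_mul_cos₁, integral_sin_sq]
    simp only [smul_eq_mul, sin_zero, cos_zero, sin_two_pi, cos_two_pi]
    ring
  have e0 : 2*π*((0:ℕ):ℝ)/4 = 0 := by push_cast; ring
  have e1 : 2*π*((1:ℕ):ℝ)/4 = π/2 := by push_cast; ring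
  have e2 : 2*π*((2:ℕ):ℝ)/4 = π := by push_cast; ring
  have e3 : 2*π*((3:ℕ):ℝ)/4 = π/2 + π := by push_cast; ring
  rw [fourPointRuleError, hint]
  simp only [Finset.sum_range_succ, Finset.range_zero, Finset.sum_empty, e0, e1, e2, e3,
    cos_zero, sin_zero, cos_pi_div_two, sin_pi_div_two, cos_pi, sin_pi, cos_add_pi, sin_add_pi]
  ring

theorem ContinuousMultilinearMap.apply_const_fin_one
    (m : ContinuousMultilinearMap ℝ (fun _ : Fin 1 => ℝ × ℝ) ℝ) (x y : ℝ) :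
    m (fun _ => (x, y)) = x * m ![(1, 0)] + y * m ![(0, 1)] := by
  have hxy : ((x, y) : ℝ × ℝ) = x • (1, 0) + y • (0, 1) := by simp
  simp only [Matrix.const_fin1_eq, hxy, Matrix.vecCons, ContinuousMultilinearMap.cons_add,
    ContinuousMultilinearMap.cons_smul, smul_eq_mul]

theorem ContinuousMultilinearMap.apply_const_fin_two
    (m : ContinuousMultilinearMap ℝ (fun _ : Fin 2 => ℝ × ℝ) ℝ) (x y : ℝ) :
    m (fun _ => (x, y)) = x ^ 2 * m ![(1, 0), (1, 0)]
      + x * y * (m ![(1, 0), (0, 1)] + m ![(0, 1), (1, 0)]) + y ^ 2 * m ![(0, 1), (0, 1)] := by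
  have hxy : ((x, y) : ℝ × ℝ) = x • (1, 0) + y • (0, 1) := by simp
  have hconst : ∀ v : ℝ × ℝ, (fun _ : Fin 2 => v) = ![v, v] := fun v => by
    ext i <;> fin_cases i <;> rfl
  simp only [hconst, hxy, Matrix.vecCons, ContinuousMultilinearMap.cons_add,
    ContinuousMultilinearMap.cons_smul, smul_eq_mul]
  simp only [← ContinuousMultilinearMap.curryLeft_apply, map_add, map_smul,
    add_apply, smul_apply, smul_eq_mul]
  ring

theorem fourPointRuleError_partialSum_three (p : FormalMultilinearSeries ℝ (ℝ × ℝ) ℝ) (r : ℝ) :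
    fourPointRuleError (fun θ => p.partialSum 3 (r * cos θ, r * sin θ)) = 0 := by
  convert fourPointRuleError_trig (p 0 ![]) (r * p 1 ![(1, 0)]) (r * p 1 ![(0, 1)])
    (r ^ 2 * p 2 ![(1, 0), (1, 0)]) (r ^ 2 * (p 2 ![(1, 0), (0, 1)] + p 2 ![(0, 1), (1, 0)]))
    (r ^ 2 * p 2 ![(0, 1), (0, 1)]) using 2
  funext θ
  simp only [FormalMultilinearSeries.partialSum, Finset.sum_range_succ, Finset.range_zero,
    Finset.sum_empty, Matrix.empty_eq, ContinuousMultilinearMap.apply_const_fin_one,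
    ContinuousMultilinearMap.apply_const_fin_two]
  ring

theorem abs_fourPointRuleError_le_of_sub_partialSum_three {g : ℝ → ℝ} (hg : Continuous g)
    (p : FormalMultilinearSeries ℝ (ℝ × ℝ) ℝ) {r B : ℝ}
    (hB : ∀ θ, |g θ - p.partialSum 3 (r * cos θ, r * sin θ)| ≤ B) :
    |fourPointRuleError g| ≤ 4 * π * B := by
  have hp : Continuous fun θ => p.partialSum 3 (r * cos θ, r * sin θ) :=
    (p.partialSum_continuous 3).comp (by fun_prop)
  rw [← sub_zero (fourPointRuleError g), ← fourPointRuleError_partialSum_three p r,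
    ← fourPointRuleError_sub (hg.intervalIntegrable _ _) (hp.intervalIntegrable _ _)]
  exact abs_fourPointRuleError_le hB

theorem norm_mul_cos_mul_sin_le {r : ℝ} (hr : 0 ≤ r) (θ : ℝ) :
    ‖((r * cos θ, r * sin θ) : ℝ × ℝ)‖ ≤ r := by
  rw [Prod.norm_def, Real.norm_eq_abs, Real.norm_eq_abs, abs_mul, abs_mul, abs_of_nonneg hr]
  exact max_le (mul_le_of_le_one_right hr (abs_cos_le_one θ))
    (mul_le_of_le_one_right hr (abs_sin_le_one θ))

/-- 4-point quadrature on the circle of radius `r` has `O(r³)` error for `C³` functions. -/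
theorem stmt_2 (f : ℝ × ℝ → ℝ) (Ω : Set (ℝ × ℝ)) (hΩ : IsOpen Ω)
    (hmem : ((0:ℝ), (0:ℝ)) ∈ Ω) (hf : ContDiffOn ℝ 3 f Ω) :
    ∃ C > (0:ℝ), ∃ r₀ > (0:ℝ), ∀ r : ℝ, 0 < r → r ≤ r₀ →
      Metric.closedBall ((0:ℝ), (0:ℝ)) r ⊆ Ω →
      |(∫ θ in (0:ℝ)..(2*π), f (r * Real.cos θ, r * Real.sin θ))
        - (2*π/4) * ∑ k ∈ Finset.range 4,
            f (r * Real.cos (2*π*k/4), r * Real.sin (2*π*k/4))|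
        ≤ C * r^3 := by
  rw [Prod.mk_zero_zero] at hmem ⊢
  obtain ⟨ε, hε, hεΩ⟩ := Metric.nhds_basis_closedBall.mem_iff.1 (hΩ.mem_nhds hmem)
  obtain ⟨M, hM⟩ := (isCompact_closedBall (0 : ℝ × ℝ) ε).exists_bound_of_continuousOn
    ((hf.continuousOn_iteratedFDerivWithin le_rfl hΩ.uniqueDiffOn).mono hεΩ)
  have hM0 : 0 ≤ M := (norm_nonneg _).trans (hM 0 (Metric.mem_closedBall_self hε.le))
  refine ⟨2 * π * M + 1, by positivity, ε, hε, fun r hr hrε _ => ?_⟩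
  have hcircle θ := norm_mul_cos_mul_sin_le hr.le θ
  have hg : Continuous fun θ => f (r * cos θ, r * sin θ) :=
    hf.continuousOn.comp_continuous (by fun_prop)
      fun θ => hεΩ (mem_closedBall_zero_iff.2 ((hcircle θ).trans hrε))
  have hrem θ : |f (r * cos θ, r * sin θ)
      - (taylorSeriesWithin f Ω 0).partialSum 3 (r * cos θ, r * sin θ)| ≤ M * r ^ 3 / 2 := by
    refine (norm_sub_partialSum_taylorSeriesWithin_le_of_closedBall (n := 2)
      hΩ.uniqueDiffOn hf hεΩ hM ((hcircle θ).trans hrε)).trans ?_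
    rw [Nat.factorial_two, Nat.cast_ofNat]
    gcongr
    exact hcircle θ
  calc _ ≤ 4 * π * (M * r ^ 3 / 2) := abs_fourPointRuleError_le_of_sub_partialSum_three hg _ hrem
    _ ≤ (2 * π * M + 1) * r ^ 3 := by nlinarith [pow_pos hr 3]
end
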